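/- Let T>0, I=(0,T), let b ∈ L^∞(I×ℝ; ℝ) be nearly incompressible with density ρ satisfying C₁ ≤ ρ ≤ C₂ a.e. (C₁, C₂ > 0), and let H ∈ Lip([0,T]×ℝ) be a Hamiltonian associated with (ρ, b). Then for every (t,x) ∈ I×ℝ and every (t',x') ∈ I×ℝ one has |H(t',x') − H(t,x)| ≥ C₁(|x'−x| − ‖b‖_∞|t'−t|). Consequently, for every h ∈ ℝ and every (t,x) in the level set H^{-1}(h), the level set H^{-1}(h) is contained in the cone {(t',x') ∈ I×ℝ : |x'−x| ≤ ‖b‖_∞|t'−t|}. -/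

import Mathlib

open MeasureTheory Set Function Filter

noncomputable section

/-- The space-time domain `I × ℝ` with `I = (0,T)`. -/
def dom (T : ℝ) : Set (ℝ × ℝ) := Ioo 0 T ×ˢ (univ : Set ℝ)

/-- A `C¹` test function on `ℝ × ℝ` with compact support contained in `[0,T) × ℝ`,
i.e. an element of `C¹_c([0,T) × ℝ)` (extended in the obvious way for `t < 0`). -/
def IsTestIC (T : ℝ) (φ : ℝ × ℝ → ℝ) : Prop :=
  ContDiff ℝ 1 φ ∧ HasCompactSupport φ ∧ ∀ p : ℝ × ℝ, T ≤ p.1 → φ p = 0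

/-- A `C¹` test function compactly supported in the open strip `(0,T) × ℝ`. -/
def IsTestInt (T : ℝ) (φ : ℝ × ℝ → ℝ) : Prop :=
  ContDiff ℝ 1 φ ∧ HasCompactSupport φ ∧ ∀ p : ℝ × ℝ, p.1 ∉ Ioo 0 T → φ p = 0

/-- `u` is a weak solution of `∂ₜ u + ∂ₓ (u b) = 0` on `(0,T) × ℝ` with `u|_{t=0} = u₀`:
for every `φ ∈ C¹_c([0,T) × ℝ)`,
`∫∫ u (∂ₜ φ + b ∂ₓ φ) dx dt + ∫ u₀(x) φ(0,x) dx = 0`. -/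
def IsWeakSol (T : ℝ) (b u : ℝ × ℝ → ℝ) (u₀ : ℝ → ℝ) : Prop :=
  ∀ φ : ℝ × ℝ → ℝ, IsTestIC T φ →
    (∫ p in dom T, u p * ((fderiv ℝ φ p) (1, 0) + b p * (fderiv ℝ φ p) (0, 1)))
      + (∫ x : ℝ, u₀ x * φ (0, x)) = 0

/-- `∂ₜ ρ + ∂ₓ (ρ b) = 0` in the sense of distributions on `(0,T) × ℝ`. -/
def ContinuityEq (T : ℝ) (b ρ : ℝ × ℝ → ℝ) : Prop :=
  ∀ φ : ℝ × ℝ → ℝ, IsTestInt T φ →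
    ∫ p in dom T, ρ p * ((fderiv ℝ φ p) (1, 0) + b p * (fderiv ℝ φ p) (0, 1)) = 0

/-- a.e. bound `|b| ≤ C` on `(0,T) × ℝ` (an `L^∞` bound). -/
def AEBound (T : ℝ) (b : ℝ × ℝ → ℝ) (C : ℝ) : Prop :=
  ∀ᵐ p ∂(volume.restrict (dom T)), |b p| ≤ C

/-- `b` is nearly incompressible with density `ρ`, with bounds `0 < C₁ ≤ ρ ≤ C₂` a.e. on
`(0,T) × ℝ`, `ρ` solving the continuity equation `∂ₜ ρ + ∂ₓ(ρ b) = 0` distributionally. -/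
def NearlyIncomp (T : ℝ) (b ρ : ℝ × ℝ → ℝ) (C₁ C₂ : ℝ) : Prop :=
  0 < C₁ ∧ 0 < C₂ ∧ Measurable ρ ∧
  (∀ᵐ p ∂(volume.restrict (dom T)), C₁ ≤ ρ p ∧ ρ p ≤ C₂) ∧
  ContinuityEq T b ρ

/-- `ρ` is a (nonnegative, locally integrable) density associated with `b`:
`ρ b ∈ L¹_loc` and `∂ₜ ρ + ∂ₓ (ρ b) = 0` in `𝒟'((0,T) × ℝ)`. -/
def IsDensity (T : ℝ) (b ρ : ℝ × ℝ → ℝ) : Prop :=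
  Measurable ρ ∧ (∀ᵐ p ∂(volume.restrict (dom T)), 0 ≤ ρ p) ∧
  LocallyIntegrableOn ρ (dom T) ∧
  LocallyIntegrableOn (fun p => ρ p * b p) (dom T) ∧
  ContinuityEq T b ρ

/-- `H` is a Hamiltonian associated with `(ρ, b)`: `∂ₓ H = ρ` and `∂ₜ H = -ρ b`
in the sense of distributions on `(0,T) × ℝ`. -/
def IsHamiltonian (T : ℝ) (b ρ H : ℝ × ℝ → ℝ) : Prop :=
  (∀ φ : ℝ × ℝ → ℝ, IsTestInt T φ →
    ∫ p in dom T, H p * (fderiv ℝ φ p) (0, 1) = - ∫ p in dom T, ρ p * φ p) ∧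
  (∀ φ : ℝ × ℝ → ℝ, IsTestInt T φ →
    ∫ p in dom T, H p * (fderiv ℝ φ p) (1, 0) = ∫ p in dom T, ρ p * b p * φ p)

/-- `X` is a regular Lagrangian flow of `b` on `[0,T]`: for a.e. `x` the curve
`t ↦ X t x` is an (absolutely continuous) integral solution of `γ' = b(t,γ)`, `γ(0) = x`,
and `X(t,·)_# 𝓛¹ ≤ L 𝓛¹` for some constant `L > 0` independent of `t`. -/
def IsRegLagFlow (T : ℝ) (b : ℝ × ℝ → ℝ) (X : ℝ → ℝ → ℝ) : Prop :=
  Measurable (fun q : ℝ × ℝ => X q.1 q.2) ∧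
  (∀ᵐ x : ℝ, X 0 x = x ∧
      IntegrableOn (fun s => b (s, X s x)) (Icc 0 T) ∧
      ∀ t ∈ Icc (0:ℝ) T, X t x = x + ∫ s in (0:ℝ)..t, b (s, X s x)) ∧
  (∃ L : ℝ, 0 < L ∧ ∀ t ∈ Icc (0:ℝ) T,
      Measure.map (X t) volume ≤ (ENNReal.ofReal L) • volume)

/-- `ρ` is locally essentially bounded on `(0,T) × ℝ` (i.e. `ρ ∈ L^∞_loc`). -/
def LocEssBdd (T : ℝ) (ρ : ℝ × ℝ → ℝ) : Prop :=
  ∀ K : Set (ℝ × ℝ), IsCompact K → K ⊆ dom T →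
    ∃ C : ℝ, ∀ᵐ p ∂(volume.restrict K), |ρ p| ≤ C

open scoped Convolution

section AuxLemmas

lemma shift_notin_tsupport {T r : ℝ} {ψ : ℝ × ℝ → ℝ}
    (hsupp : tsupport ψ ⊆ Metric.closedBall 0 r)
    {p q : ℝ × ℝ} (hp1 : r < p.1) (hp2 : p.1 < T - r) (hq : q.1 ∉ Ioo 0 T) :
    p - q ∉ tsupport ψ := by
  intro hmem
  have h1 : ‖p - q‖ ≤ r := by
    simpa [Metric.mem_closedBall, dist_zero_right] using hsupp hmem
  have h2 : |p.1 - q.1| ≤ r := by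
    have := (norm_fst_le (p - q)).trans h1
    simpa [Real.norm_eq_abs] using this
  have h3 := abs_le.1 h2
  simp only [Set.mem_Ioo, not_and_or, not_lt] at hq
  rcases hq with h | h
  · linarith [h3.2]
  · linarith [h3.1]

lemma testInt_of_shift {T r : ℝ} (ψ : ℝ × ℝ → ℝ) (hψ1 : ContDiff ℝ 1 ψ)
    (hψc : HasCompactSupport ψ) (hsupp : tsupport ψ ⊆ Metric.closedBall 0 r)
    {p : ℝ × ℝ} (hp1 : r < p.1) (hp2 : p.1 < T - r) :
    IsTestInt T (fun q => ψ (p - q)) := by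
  refine ⟨hψ1.comp (contDiff_const.sub contDiff_id),
    hψc.comp_homeomorph (Homeomorph.subLeft p), fun q hq => ?_⟩
  exact image_eq_zero_of_notMem_tsupport (shift_notin_tsupport hsupp hp1 hp2 hq)

lemma fderiv_shift (ψ : ℝ × ℝ → ℝ) (hψ : ContDiff ℝ 1 ψ) (p q v : ℝ × ℝ) :
    (fderiv ℝ (fun q' => ψ (p - q')) q) v = -((fderiv ℝ ψ (p - q)) v) := by
  have hg : HasFDerivAt (fun q' : ℝ × ℝ => p - q')
      ((0 : (ℝ × ℝ) →L[ℝ] (ℝ × ℝ)) - ContinuousLinearMap.id ℝ (ℝ × ℝ)) q :=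
    (hasFDerivAt_const p q).sub (hasFDerivAt_id q)
  have hf : HasFDerivAt ψ (fderiv ℝ ψ (p - q)) (p - q) :=
    (hψ.differentiable one_ne_zero (p - q)).hasFDerivAt
  have h2 : fderiv ℝ (fun q' => ψ (p - q')) q
      = (fderiv ℝ ψ (p - q)).comp
        ((0 : (ℝ × ℝ) →L[ℝ] (ℝ × ℝ)) - ContinuousLinearMap.id ℝ (ℝ × ℝ)) := by
    have h3 : HasFDerivAt (fun q' => ψ (p - q'))
        ((fderiv ℝ ψ (p - q)).comp
          ((0 : (ℝ × ℝ) →L[ℝ] (ℝ × ℝ)) - ContinuousLinearMap.id ℝ (ℝ × ℝ))) q :=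
      hf.comp q hg
    exact h3.fderiv
  rw [h2]
  simp

lemma conv_hasFDerivAt (G : ℝ × ℝ → ℝ) (hGc : Continuous G) (ψ : ℝ × ℝ → ℝ)
    (hψ : ContDiff ℝ 1 ψ) (hψc : HasCompactSupport ψ) (p : ℝ × ℝ) :
    HasFDerivAt (G ⋆[ContinuousLinearMap.lsmul ℝ ℝ, volume] ψ)
      ((G ⋆[(ContinuousLinearMap.lsmul ℝ ℝ).precompR (ℝ × ℝ), volume] fderiv ℝ ψ) p) p :=
  hψc.hasFDerivAt_convolution_right _ hGc.locallyIntegrable hψ p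

lemma conv_fderiv_apply (G : ℝ × ℝ → ℝ) (hGc : Continuous G) (ψ : ℝ × ℝ → ℝ)
    (hψ : ContDiff ℝ 1 ψ) (hψc : HasCompactSupport ψ) (p v : ℝ × ℝ) :
    (G ⋆[(ContinuousLinearMap.lsmul ℝ ℝ).precompR (ℝ × ℝ), volume] fderiv ℝ ψ) p v
      = ∫ q, G q * (fderiv ℝ ψ (p - q)) v := by
  rw [convolution_precompR_apply _ hGc.locallyIntegrable (hψc.fderiv ℝ)
    (hψ.continuous_fderiv one_ne_zero)]
  rw [convolution_def]
  simp [ContinuousLinearMap.lsmul_apply, smul_eq_mul]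

lemma conv_eq (G : ℝ × ℝ → ℝ) (ψ : ℝ × ℝ → ℝ) (p : ℝ × ℝ) :
    (G ⋆[ContinuousLinearMap.lsmul ℝ ℝ, volume] ψ) p = ∫ q, G q * ψ (p - q) := by
  rw [convolution_def]
  simp [ContinuousLinearMap.lsmul_apply, smul_eq_mul]

lemma exists_lipschitz_extension {T : ℝ} (H : ℝ × ℝ → ℝ) (K : NNReal) (hT : 0 ≤ T)
    (hH : LipschitzOnWith K H (Icc 0 T ×ˢ (univ : Set ℝ))) :
    ∃ G : ℝ × ℝ → ℝ, LipschitzWith K G ∧ ∀ p : ℝ × ℝ, p.1 ∈ Icc 0 T → G p = H p := by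
  refine ⟨fun p => H (min (max p.1 0) T, p.2), ?_, ?_⟩
  · rw [lipschitzWith_iff_dist_le_mul]
    intro p q
    have hmem : ∀ r : ℝ × ℝ, ((min (max r.1 0) T, r.2) : ℝ × ℝ) ∈ Icc 0 T ×ˢ (univ : Set ℝ) :=
      fun r => ⟨⟨le_min (le_max_right _ _) hT, min_le_right _ _⟩, trivial⟩
    have hl := lipschitzOnWith_iff_dist_le_mul.1 hH _ (hmem p) _ (hmem q)
    refine hl.trans ?_
    have hd : dist ((min (max p.1 0) T, p.2) : ℝ × ℝ) (min (max q.1 0) T, q.2) ≤ dist p q := by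
      rw [Prod.dist_eq, Prod.dist_eq]
      refine max_le_max ?_ le_rfl
      rw [Real.dist_eq, Real.dist_eq]
      calc |min (max p.1 0) T - min (max q.1 0) T| ≤ max |max p.1 0 - max q.1 0| |T - T| :=
            abs_min_sub_min_le_max _ _ _ _
        _ ≤ |p.1 - q.1| := by
            rw [sub_self, abs_zero]
            simpa using (abs_max_sub_max_le_abs p.1 q.1 0)
    exact mul_le_mul_of_nonneg_left hd K.coe_nonneg
  · intro p hp
    have : ((min (max p.1 0) T, p.2) : ℝ × ℝ) = p := by
      have h1 : max p.1 0 = p.1 := max_eq_left hp.1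
      have h2 : min p.1 T = p.1 := min_eq_left hp.2
      rw [h1, h2]
    simp only [this]

end AuxLemmas


set_option maxHeartbeats 2000000

/-- with `b` nearly incompressible (density `C₁ ≤ ρ ≤ C₂`) and Lipschitz
Hamiltonian `H`, for all `(t,x), (t',x') ∈ (0,T) × ℝ` one has
`|H(t',x') - H(t,x)| ≥ C₁ (|x'-x| - ‖b‖_∞ |t'-t|)` (where `Cb` is any a.e. bound for `|b|`);
consequently every level set `H⁻¹(h)` is contained in the cone
`{(t',x') : |x'-x| ≤ ‖b‖_∞ |t'-t|}` around any of its points `(t,x)`. -/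
theorem stmt5_level_sets_in_cone
    (T : ℝ) (hT : 0 < T) (b ρ H : ℝ × ℝ → ℝ) (C₁ C₂ Cb : ℝ)
    (hbm : Measurable b) (hbb : AEBound T b Cb)
    (hni : NearlyIncomp T b ρ C₁ C₂)
    (hHl : ∃ K : NNReal, LipschitzOnWith K H (Icc 0 T ×ˢ (univ : Set ℝ)))
    (hH : IsHamiltonian T b ρ H) :
    (∀ p ∈ dom T, ∀ q ∈ dom T,
      C₁ * (|q.2 - p.2| - Cb * |q.1 - p.1|) ≤ |H q - H p|) ∧
    (∀ h : ℝ, ∀ p ∈ dom T, H p = h → ∀ q ∈ dom T, H q = h →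
      |q.2 - p.2| ≤ Cb * |q.1 - p.1|) := by
  obtain ⟨hC₁, hC₂, hρm, hρb, _⟩ := hni
  obtain ⟨K, hK⟩ := hHl
  have hdommeas : MeasurableSet (dom T) := measurableSet_Ioo.prod MeasurableSet.univ
  have hμ0 : volume.restrict (dom T) ≠ 0 := by
    rw [Ne, Measure.restrict_eq_zero]
    have hopen : IsOpen (dom T) := isOpen_Ioo.prod isOpen_univ
    have hne : (dom T).Nonempty := ⟨(T/2, 0), ⟨⟨by positivity, by linarith⟩, trivial⟩⟩
    exact (hopen.measure_pos volume hne).ne'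
  have hCb : 0 ≤ Cb := by
    have : (ae (volume.restrict (dom T))).NeBot := ae_neBot.2 hμ0
    obtain ⟨q0, hq0⟩ := hbb.exists
    exact (abs_nonneg _).trans hq0
  obtain ⟨G, hGlip, hGeq⟩ := exists_lipschitz_extension H K hT.le hK
  have hGc : Continuous G := hGlip.continuous
  have hGH : ∀ q : ℝ × ℝ, q ∈ dom T → G q = H q := fun q hq =>
    hGeq q ⟨hq.1.1.le, hq.1.2.le⟩
  have main : ∀ p ∈ dom T, ∀ q ∈ dom T,
      C₁ * (|q.2 - p.2| - Cb * |q.1 - p.1|) ≤ |H q - H p| := by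
    rintro ⟨t, x⟩ hp ⟨t', x'⟩ hq
    simp only
    have ht : 0 < t := hp.1.1
    have ht2 : t < T := hp.1.2
    have ht' : 0 < t' := hq.1.1
    have ht'2 : t' < T := hq.1.2
    rcases le_or_gt (|x' - x|) (Cb * |t' - t|) with hcase | hcase
    · exact le_trans (mul_nonpos_of_nonneg_of_nonpos hC₁.le (by linarith)) (abs_nonneg _)
    have habsΔt : 0 ≤ Cb * |t' - t| := mul_nonneg hCb (abs_nonneg _)
    refine le_of_forall_pos_le_add (fun ε hε => ?_)
    set δ : ℝ := min (min t (T - t)) (min t' (T - t')) with hδdef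
    have hδ : 0 < δ :=
      lt_min (lt_min ht (by linarith)) (lt_min ht' (by linarith))
    have hδt : δ ≤ t := (min_le_left _ _).trans (min_le_left _ _)
    have hδTt : δ ≤ T - t := (min_le_left _ _).trans (min_le_right _ _)
    have hδt' : δ ≤ t' := (min_le_right _ _).trans (min_le_left _ _)
    have hδTt' : δ ≤ T - t' := (min_le_right _ _).trans (min_le_right _ _)
    have hK1 : (0:ℝ) < 2 * (K : ℝ) + 1 := by positivity
    set r : ℝ := min (δ / 2) (ε / (2 * (K : ℝ) + 1)) with hrdef
    have hr : 0 < r := lt_min (by positivity) (by positivity)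
    have hrδ : r ≤ δ / 2 := min_le_left _ _
    have h2Kr : 2 * (K : ℝ) * r ≤ ε := by
      have h1 : r ≤ ε / (2 * (K : ℝ) + 1) := min_le_right _ _
      have h2 : 2 * (K : ℝ) * r ≤ 2 * (K : ℝ) * (ε / (2 * (K : ℝ) + 1)) := by
        have : (0:ℝ) ≤ 2 * (K : ℝ) := by positivity
        exact mul_le_mul_of_nonneg_left h1 this
      have h3 : 2 * (K : ℝ) * (ε / (2 * (K : ℝ) + 1)) ≤ ε := by
        rw [mul_div_assoc']
        rw [div_le_iff₀ hK1]
        nlinarith [hε.le, K.coe_nonneg]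
      linarith
    have wt : t ∈ Ioo r (T - r) := ⟨by linarith, by linarith⟩
    have wt' : t' ∈ Ioo r (T - r) := ⟨by linarith, by linarith⟩
    set bump : ContDiffBump (0 : ℝ × ℝ) :=
      ⟨r / 2, r, by positivity, by linarith⟩ with hbumpdef
    set ψ : ℝ × ℝ → ℝ := bump.normed volume with hψdef
    have hψ1 : ContDiff ℝ 1 ψ := bump.contDiff_normed
    have hψc : HasCompactSupport ψ := bump.hasCompactSupport_normed
    have hψs : tsupport ψ ⊆ Metric.closedBall 0 r := by
      rw [hψdef, bump.tsupport_normed_eq]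
    have hψnn : ∀ q, 0 ≤ ψ q := fun q => bump.nonneg_normed q
    have hψint : ∫ q, ψ q = 1 := bump.integral_normed
    set Hc : ℝ × ℝ → ℝ := G ⋆[ContinuousLinearMap.lsmul ℝ ℝ, volume] ψ with hHcdef
    set D : (ℝ × ℝ) → (ℝ × ℝ) →L[ℝ] ℝ :=
      fun p => (G ⋆[(ContinuousLinearMap.lsmul ℝ ℝ).precompR (ℝ × ℝ), volume] fderiv ℝ ψ) p
      with hDdef
    have hderiv : ∀ p, HasFDerivAt Hc (D p) p := fun p => conv_hasFDerivAt G hGc ψ hψ1 hψc p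
    have hDform : ∀ p v, D p v = ∫ q, G q * (fderiv ℝ ψ (p - q)) v :=
      fun p v => conv_fderiv_apply G hGc ψ hψ1 hψc p v
    -- derivative bounds in the window
    have bounds : ∀ p : ℝ × ℝ, p.1 ∈ Ioo r (T - r) →
        C₁ ≤ D p (0, 1) ∧ 0 ≤ D p (1, 0) + Cb * D p (0, 1) ∧
          D p (1, 0) - Cb * D p (0, 1) ≤ 0 := by
      intro p hpw
      set φ : ℝ × ℝ → ℝ := fun q => ψ (p - q) with hφdef
      have htest : IsTestInt T φ := testInt_of_shift ψ hψ1 hψc hψs hpw.1 hpw.2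
      have hφ0 : ∀ q : ℝ × ℝ, q ∉ dom T → φ q = 0 := by
        intro q hq
        exact htest.2.2 q (fun hmem => hq ⟨hmem, trivial⟩)
      have hφcont : Continuous φ := htest.1.continuous
      have hφnn : ∀ q, 0 ≤ φ q := fun q => bump.nonneg_normed _
      have hφint1 : ∫ q in dom T, φ q = 1 := by
        rw [setIntegral_eq_integral_of_forall_compl_eq_zero hφ0, hφdef]
        rw [integral_sub_left_eq_self ψ volume p]
        exact hψint
      have hφi : Integrable φ (volume.restrict (dom T)) :=
        (hφcont.integrable_of_hasCompactSupport htest.2.1).restrict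
      have hρφi : Integrable (fun q => ρ q * φ q) (volume.restrict (dom T)) := by
        refine Integrable.mono' (hφi.const_mul C₂)
          ((hρm.aemeasurable.mul hφcont.measurable.aemeasurable).aestronglyMeasurable) ?_
        filter_upwards [hρb] with q hq
        rw [Real.norm_eq_abs, abs_mul, abs_of_nonneg (hφnn q),
          abs_of_nonneg (le_trans hC₁.le hq.1)]
        exact mul_le_mul_of_nonneg_right hq.2 (hφnn q)
      have hρbφi : Integrable (fun q => ρ q * b q * φ q) (volume.restrict (dom T)) := by
        refine Integrable.mono' (hφi.const_mul (C₂ * Cb))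
          (((hρm.mul hbm).aemeasurable.mul hφcont.measurable.aemeasurable).aestronglyMeasurable) ?_
        filter_upwards [hρb, hbb] with q hq hbq
        rw [Real.norm_eq_abs, abs_mul, abs_of_nonneg (hφnn q), abs_mul,
          abs_of_nonneg (le_trans hC₁.le hq.1)]
        have hb1 : ρ q * |b q| ≤ C₂ * Cb :=
          mul_le_mul hq.2 hbq (abs_nonneg _) hC₂.le
        exact mul_le_mul_of_nonneg_right hb1 (hφnn q)
      have hDdom : ∀ v : ℝ × ℝ, D p v = - ∫ q in dom T, H q * (fderiv ℝ φ q) v := by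
        intro v
        rw [hDform p v]
        have hzero : ∀ q : ℝ × ℝ, q ∉ dom T → G q * (fderiv ℝ ψ (p - q)) v = 0 := by
          intro q hq
          have hq1 : q.1 ∉ Ioo 0 T := fun hmem => hq ⟨hmem, trivial⟩
          have hnt : p - q ∉ tsupport ψ := shift_notin_tsupport hψs hpw.1 hpw.2 hq1
          have hz : fderiv ℝ ψ (p - q) = 0 := by
            by_contra hne
            exact hnt (support_fderiv_subset ℝ hne)
          rw [hz]
          simp
        rw [← setIntegral_eq_integral_of_forall_compl_eq_zero hzero, ← integral_neg]
        refine setIntegral_congr_fun hdommeas (fun q hq => ?_)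
        rw [hφdef]
        rw [fderiv_shift ψ hψ1 p q v, hGH q hq]
        ring
      have h1 : D p (0, 1) = ∫ q in dom T, ρ q * φ q := by
        rw [hDdom (0, 1), hH.1 φ htest, neg_neg]
      have h2 : D p (1, 0) = - ∫ q in dom T, ρ q * b q * φ q := by
        rw [hDdom (1, 0), hH.2 φ htest]
      refine ⟨?_, ?_, ?_⟩
      · rw [h1]
        have hc : ∫ q in dom T, C₁ * φ q = C₁ := by
          rw [integral_const_mul, hφint1, mul_one]
        rw [← hc]
        refine integral_mono_ae (hφi.const_mul C₁) hρφi ?_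
        filter_upwards [hρb] with q hq
        exact mul_le_mul_of_nonneg_right hq.1 (hφnn q)
      · rw [h1, h2]
        have he : 0 ≤ ∫ q in dom T, (Cb * (ρ q * φ q) - ρ q * b q * φ q) := by
          refine integral_nonneg_of_ae ?_
          filter_upwards [hρb, hbb] with q hq hbq
          have h0ρ : 0 ≤ ρ q := le_trans hC₁.le hq.1
          have hb2 : ρ q * b q ≤ ρ q * Cb :=
            mul_le_mul_of_nonneg_left (le_trans (le_abs_self _) hbq) h0ρ
          have h9 : Cb * (ρ q * φ q) - ρ q * b q * φ q = (ρ q * Cb - ρ q * b q) * φ q := by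
            ring
          rw [h9]
          exact mul_nonneg (sub_nonneg.2 hb2) (hφnn q)
        rw [integral_sub (hρφi.const_mul Cb) hρbφi, integral_const_mul] at he
        linarith
      · rw [h1, h2]
        have he : 0 ≤ ∫ q in dom T, (Cb * (ρ q * φ q) + ρ q * b q * φ q) := by
          refine integral_nonneg_of_ae ?_
          filter_upwards [hρb, hbb] with q hq hbq
          have h0ρ : 0 ≤ ρ q := le_trans hC₁.le hq.1
          have hb2 : ρ q * (-Cb) ≤ ρ q * b q :=
            mul_le_mul_of_nonneg_left (neg_le_of_abs_le hbq) h0ρ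
          have h9 : Cb * (ρ q * φ q) + ρ q * b q * φ q = (ρ q * Cb + ρ q * b q) * φ q := by
            ring
          rw [h9]
          refine mul_nonneg (by nlinarith) (hφnn q)
        rw [integral_add (hρφi.const_mul Cb) hρbφi, integral_const_mul] at he
        linarith
    -- spatial monotonicity
    have hmono_x : ∀ s, s ∈ Ioo r (T - r) → ∀ y y' : ℝ, y ≤ y' →
        Hc (s, y) + C₁ * (y' - y) ≤ Hc (s, y') := by
      intro s hs y y' hyy
      have hF : ∀ z : ℝ, HasDerivAt (fun z => Hc (s, z) - C₁ * z) (D (s, z) (0, 1) - C₁) z := by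
        intro z
        have h1 : HasDerivAt (fun z : ℝ => ((s, z) : ℝ × ℝ)) (((0 : ℝ), (1 : ℝ))) z :=
          (hasDerivAt_const z s).prodMk (hasDerivAt_id z)
        have h2 : HasDerivAt (fun z => Hc (s, z)) (D (s, z) (0, 1)) z :=
          (hderiv (s, z)).comp_hasDerivAt z h1
        simpa using h2.fun_sub ((hasDerivAt_id z).const_mul C₁)
      have hm : Monotone (fun z => Hc (s, z) - C₁ * z) :=
        monotone_of_hasDerivAt_nonneg hF (by
          intro z
          exact sub_nonneg.2 (bounds (s, z) hs).1)
      have := hm hyy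
      simp only at this
      linarith
    -- temporal monotonicity along cone lines
    have hmono_t : ∀ a c x0 : ℝ, a ≤ c → r < a → c < T - r →
        Hc (a, x0) ≤ Hc (c, x0 + Cb * (c - a)) ∧
          Hc (c, x0 - Cb * (c - a)) ≤ Hc (a, x0) := by
      intro a c x0 hac ha hc
      constructor
      · have hF : ∀ s : ℝ, HasDerivAt (fun s => Hc (s, x0 + Cb * (s - a)))
            (D (s, x0 + Cb * (s - a)) (1, Cb)) s := by
          intro s
          have h1 : HasDerivAt (fun s : ℝ => x0 + Cb * (s - a)) Cb s := by
            simpa using (((hasDerivAt_id s).sub_const a).const_mul Cb).const_add x0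
          have hcurve : HasDerivAt (fun s : ℝ => ((s, x0 + Cb * (s - a)) : ℝ × ℝ))
              (((1 : ℝ), Cb)) s := (hasDerivAt_id s).prodMk h1
          exact (hderiv _).comp_hasDerivAt s hcurve
        have hmF : MonotoneOn (fun s => Hc (s, x0 + Cb * (s - a))) (Icc a c) := by
          refine monotoneOn_of_deriv_nonneg (convex_Icc a c)
            (fun s _ => (hF s).differentiableAt.continuousAt.continuousWithinAt)
            (fun s _ => (hF s).differentiableAt.differentiableWithinAt) ?_
          intro s hs
          rw [interior_Icc] at hs
          rw [(hF s).deriv]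
          have hsw : ((s, x0 + Cb * (s - a)) : ℝ × ℝ).1 ∈ Ioo r (T - r) :=
            ⟨by simpa using by linarith [hs.1], by simpa using by linarith [hs.2]⟩
          obtain ⟨hb1, hb2, hb3⟩ := bounds _ hsw
          have hv : ((1 : ℝ), Cb) = ((1 : ℝ), (0 : ℝ)) + Cb • ((0 : ℝ), (1 : ℝ)) := by
            simp [Prod.ext_iff]
          rw [hv, (D _).map_add, (D _).map_smul, smul_eq_mul]
          linarith
        have h5 := hmF (left_mem_Icc.2 hac) (right_mem_Icc.2 hac) hac
        simpa using h5
      · have hF : ∀ s : ℝ, HasDerivAt (fun s => Hc (s, x0 - Cb * (s - a)))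
            (D (s, x0 - Cb * (s - a)) (1, -Cb)) s := by
          intro s
          have h1 : HasDerivAt (fun s : ℝ => x0 - Cb * (s - a)) (-Cb) s := by
            simpa using (((hasDerivAt_id s).sub_const a).const_mul Cb).const_sub x0
          have hcurve : HasDerivAt (fun s : ℝ => ((s, x0 - Cb * (s - a)) : ℝ × ℝ))
              (((1 : ℝ), -Cb)) s := (hasDerivAt_id s).prodMk h1
          exact (hderiv _).comp_hasDerivAt s hcurve
        have hmF : AntitoneOn (fun s => Hc (s, x0 - Cb * (s - a))) (Icc a c) := by
          refine antitoneOn_of_deriv_nonpos (convex_Icc a c)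
            (fun s _ => (hF s).differentiableAt.continuousAt.continuousWithinAt)
            (fun s _ => (hF s).differentiableAt.differentiableWithinAt) ?_
          intro s hs
          rw [interior_Icc] at hs
          rw [(hF s).deriv]
          have hsw : ((s, x0 - Cb * (s - a)) : ℝ × ℝ).1 ∈ Ioo r (T - r) :=
            ⟨by simpa using by linarith [hs.1], by simpa using by linarith [hs.2]⟩
          obtain ⟨hb1, hb2, hb3⟩ := bounds _ hsw
          have hv : ((1 : ℝ), -Cb) = ((1 : ℝ), (0 : ℝ)) - Cb • ((0 : ℝ), (1 : ℝ)) := by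
            simp [Prod.ext_iff]
          rw [hv, (D _).map_sub, (D _).map_smul, smul_eq_mul]
          linarith
        have h5 := hmF (left_mem_Icc.2 hac) (right_mem_Icc.2 hac) hac
        simpa using h5
    -- mollification error
    have herr : ∀ p : ℝ × ℝ, |Hc p - G p| ≤ (K : ℝ) * r := by
      intro p
      have hcont1 : Continuous fun q : ℝ × ℝ => (G (p - q) - G p) * ψ q :=
        ((hGc.comp (continuous_const.sub continuous_id)).sub continuous_const).mul hψ1.continuous
      have hint3 : Integrable (fun q : ℝ × ℝ => (G (p - q) - G p) * ψ q) volume :=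
        hcont1.integrable_of_hasCompactSupport hψc.mul_left
      have hint2 : Integrable (fun q : ℝ × ℝ => G p * ψ q) volume :=
        (hψ1.continuous.integrable_of_hasCompactSupport hψc).const_mul (G p)
      have hint1 : Integrable (fun q : ℝ × ℝ => G (p - q) * ψ q) volume := by
        have : (fun q : ℝ × ℝ => G (p - q) * ψ q)
            = fun q => (G (p - q) - G p) * ψ q + G p * ψ q := by
          ext q; ring
        rw [this]
        exact hint3.add hint2
      have hHcp : Hc p = ∫ q, G (p - q) * ψ q := by
        rw [hHcdef, conv_eq G ψ p]
        rw [← integral_sub_left_eq_self (fun q => G (p - q) * ψ q) volume p]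
        congr 1
        ext q
        simp [sub_sub_cancel]
      have hGp : G p = ∫ q, G p * ψ q := by
        rw [integral_const_mul, hψint, mul_one]
      have hsub : Hc p - G p = ∫ q, (G (p - q) - G p) * ψ q := by
        have e : ∫ q, (G (p - q) - G p) * ψ q
            = (∫ q, G (p - q) * ψ q) - ∫ q, G p * ψ q := by
          rw [← integral_sub hint1 hint2]
          congr 1
          ext q
          ring
        rw [e, ← hGp, ← hHcp]
      rw [hsub]
      have hbound : ∀ q : ℝ × ℝ, |(G (p - q) - G p) * ψ q| ≤ (K : ℝ) * r * ψ q := by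
        intro q
        by_cases hq : ψ q = 0
        · simp [hq]
        · have hqs : q ∈ tsupport ψ := subset_tsupport ψ hq
          have hqr : ‖q‖ ≤ r := by
            simpa [Metric.mem_closedBall, dist_zero_right] using hψs hqs
          have hlip := hGlip.dist_le_mul (p - q) p
          have hd : dist (p - q) p = ‖q‖ := by
            rw [dist_eq_norm]
            simp
          rw [Real.dist_eq, hd] at hlip
          rw [abs_mul, abs_of_nonneg (hψnn q)]
          have h6 : |G (p - q) - G p| ≤ (K : ℝ) * r :=
            hlip.trans (mul_le_mul_of_nonneg_left hqr K.coe_nonneg)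
          exact mul_le_mul_of_nonneg_right h6 (hψnn q)
      calc |∫ q, (G (p - q) - G p) * ψ q| ≤ ∫ q, |(G (p - q) - G p) * ψ q| := by
            simpa only [Real.norm_eq_abs] using
              norm_integral_le_integral_norm (μ := volume)
                (fun q : ℝ × ℝ => (G (p - q) - G p) * ψ q)
        _ ≤ ∫ q, (K : ℝ) * r * ψ q := by
            refine integral_mono hint3.abs ((hψ1.continuous.integrable_of_hasCompactSupport
              hψc).const_mul ((K : ℝ) * r)) ?_
            intro q
            exact hbound q
        _ = (K : ℝ) * r := by rw [integral_const_mul, hψint, mul_one]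
    -- put everything together
    have herr_p := abs_le.1 (herr (t, x))
    have herr_q := abs_le.1 (herr (t', x'))
    have hGp : G (t, x) = H (t, x) := hGH (t, x) ⟨⟨ht, ht2⟩, trivial⟩
    have hGq : G (t', x') = H (t', x') := hGH (t', x') ⟨⟨ht', ht'2⟩, trivial⟩
    rw [hGp] at herr_p
    rw [hGq] at herr_q
    rcases abs_cases (x' - x) with ⟨habs, hsign⟩ | ⟨habs, hsign⟩
    · -- x ≤ x'
      set m : ℝ := x + Cb * |t' - t| with hmdef
      have hmx' : m ≤ x' := by
        rw [habs] at hcase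
        linarith [hcase.le]
      have hm1 : Hc (t, x) ≤ Hc (t', m) := by
        rcases le_total t t' with h | h
        · have h5 := (hmono_t t t' x h wt.1 wt'.2).1
          have habs' : |t' - t| = t' - t := abs_of_nonneg (by linarith)
          rw [hmdef, habs']
          exact h5
        · have h5 := (hmono_t t' t m h wt'.1 wt.2).2
          have habs' : |t' - t| = t - t' := by
            rw [abs_of_nonpos (by linarith : t' - t ≤ 0)]; ring
          have hxm : m - Cb * (t - t') = x := by rw [hmdef, habs']; ring
          rw [hxm] at h5
          exact h5
      have hm2 : Hc (t', m) + C₁ * (x' - m) ≤ Hc (t', x') := hmono_x t' wt' m x' hmx'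
      have hfin : C₁ * (|x' - x| - Cb * |t' - t|) ≤ Hc (t', x') - Hc (t, x) := by
        rw [habs, hmdef] at *
        nlinarith [hm1, hm2]
      have hle : H (t', x') - H (t, x) ≤ |H (t', x') - H (t, x)| := le_abs_self _
      linarith [herr_p.1, herr_p.2, herr_q.1, herr_q.2, h2Kr]
    · -- x' ≤ x
      set m : ℝ := x - Cb * |t' - t| with hmdef
      have hmx' : x' ≤ m := by
        rw [habs] at hcase
        linarith [hcase.le]
      have hm1 : Hc (t', m) ≤ Hc (t, x) := by
        rcases le_total t t' with h | h
        · have h5 := (hmono_t t t' x h wt.1 wt'.2).2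
          have habs' : |t' - t| = t' - t := abs_of_nonneg (by linarith)
          rw [hmdef, habs']
          exact h5
        · have h5 := (hmono_t t' t m h wt'.1 wt.2).1
          have habs' : |t' - t| = t - t' := by
            rw [abs_of_nonpos (by linarith : t' - t ≤ 0)]; ring
          have hxm : m + Cb * (t - t') = x := by rw [hmdef, habs']; ring
          rw [hxm] at h5
          exact h5
      have hm2 : Hc (t', x') + C₁ * (m - x') ≤ Hc (t', m) := hmono_x t' wt' x' m hmx'
      have hfin : C₁ * (|x' - x| - Cb * |t' - t|) ≤ Hc (t, x) - Hc (t', x') := by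
        rw [habs, hmdef] at *
        nlinarith [hm1, hm2]
      have hle : -(H (t', x') - H (t, x)) ≤ |H (t', x') - H (t, x)| := neg_le_abs _
      linarith [herr_p.1, herr_p.2, herr_q.1, herr_q.2, h2Kr]
  refine ⟨main, ?_⟩
  intro h p hp hph q hq hqh
  have h5 := main p hp q hq
  rw [hph, hqh, sub_self, abs_zero] at h5
  by_contra hcon
  push_neg at hcon
  nlinarith [h5, hC₁]
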